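/- arXiv:2102.10035 — 10 statements merged into one kernel-verified Lean document; each statement's English description precedes it below -/
import Mathlib

section
/- NetKAT sum distributes over DyNetKAT sequencing up to bisimilarity: for dup-free NetKAT policies z, y and any DyNetKAT process p, (z + y) ; p ∼ (z ; p) ⊕ (y ; p). -/
/-- Transition labels of the DyNetKAT operational semantics:
packet pairs `(σ,σ')`, receive `x?z`, send `x!z`, and `rcfg(x,z)`. -/
inductive Lbl (Pk N C : Type) where
  | pkt (a b : Pk)
  | recv (x : C) (z : N)
  | send (x : C) (z : N)
  | rcfg (x : C) (z : N)

/-- DyNetKAT process terms, over packets `Pk`, dup-free NetKAT policies `N`,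
channels `C` and recursion variables `V`.  `seqP z d` is `z ; d`,
`test a b d` is `(α·π);d` for a complete test/assignment pair `(a,b)`,
`recvP`, `sendP`, `rcfgP` are communication prefixes, `par` is `∥`,
`choice` is `⊕`, `lmerge` is left merge `⌊`, `cmerge` is communication
merge `|`, `restr L` is `δ_L`, `proj n` is `π_n`, `var` a recursion variable. -/
inductive Proc (Pk N C V : Type) where
  | bot
  | seqP (z : N) (d : Proc Pk N C V)
  | test (a b : Pk) (d : Proc Pk N C V)
  | recvP (x : C) (z : N) (d : Proc Pk N C V)
  | sendP (x : C) (z : N) (d : Proc Pk N C V)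
  | rcfgP (x : C) (z : N) (d : Proc Pk N C V)
  | par (p q : Proc Pk N C V)
  | choice (p q : Proc Pk N C V)
  | lmerge (p q : Proc Pk N C V)
  | cmerge (p q : Proc Pk N C V)
  | restr (L : Set (Lbl Pk N C)) (d : Proc Pk N C V)
  | proj (n : ℕ) (d : Proc Pk N C V)
  | var (v : V)

/-- The DyNetKAT labelled transition relation over configurations
`(d, H, H')`, parameterized by the NetKAT denotation `den` (on head
packets, sufficient for dup-free policies) and the defining equations
`env` of recursion variables. -/
inductive Step {Pk N C V : Type} (den : N → Pk → Set Pk) (env : V → Proc Pk N C V) :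
    Proc Pk N C V → List Pk → List Pk → Lbl Pk N C →
    Proc Pk N C V → List Pk → List Pk → Prop
  | seq {z p σ σ' H H'} (h : σ' ∈ den z σ) :
      Step den env (.seqP z p) (σ :: H) H' (.pkt σ σ') p H (σ' :: H')
  | test {a b p H H'} :
      Step den env (.test a b p) (a :: H) H' (.pkt a b) p H (b :: H')
  | recv {x z p H H'} :
      Step den env (.recvP x z p) H H' (.recv x z) p H H'
  | send {x z p H H'} :
      Step den env (.sendP x z p) H H' (.send x z) p H H'
  | rcfg {x z p H H'} :
      Step den env (.rcfgP x z p) H H' (.rcfg x z) p H H'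
  | choiceL {p q H0 H1 γ p' H0' H1'} :
      Step den env p H0 H1 γ p' H0' H1' →
      Step den env (.choice p q) H0 H1 γ p' H0' H1'
  | choiceR {p q H0 H1 γ q' H0' H1'} :
      Step den env q H0 H1 γ q' H0' H1' →
      Step den env (.choice p q) H0 H1 γ q' H0' H1'
  | parL {p q H0 H1 γ p' H0' H1'} :
      Step den env p H0 H1 γ p' H0' H1' →
      Step den env (.par p q) H0 H1 γ (.par p' q) H0' H1'
  | parR {p q H0 H1 γ q' H0' H1'} :
      Step den env q H0 H1 γ q' H0' H1' →
      Step den env (.par p q) H0 H1 γ (.par p q') H0' H1'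
  | parSyncSR {p q x z p' q' H H'} :
      Step den env p H H' (.send x z) p' H H' →
      Step den env q H H' (.recv x z) q' H H' →
      Step den env (.par p q) H H' (.rcfg x z) (.par p' q') H H'
  | parSyncRS {p q x z p' q' H H'} :
      Step den env p H H' (.recv x z) p' H H' →
      Step den env q H H' (.send x z) q' H H' →
      Step den env (.par p q) H H' (.rcfg x z) (.par p' q') H H'
  | lmerge {p q H0 H1 γ p' H0' H1'} :
      Step den env p H0 H1 γ p' H0' H1' →
      Step den env (.lmerge p q) H0 H1 γ (.par p' q) H0' H1'
  | cmergeRS {p q x z p' q' H H'} :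
      Step den env p H H' (.recv x z) p' H H' →
      Step den env q H H' (.send x z) q' H H' →
      Step den env (.cmerge p q) H H' (.rcfg x z) (.par p' q') H H'
  | cmergeSR {p q x z p' q' H H'} :
      Step den env p H H' (.send x z) p' H H' →
      Step den env q H H' (.recv x z) q' H H' →
      Step den env (.cmerge p q) H H' (.rcfg x z) (.par p' q') H H'
  | restr {L p H0 H1 γ p' H0' H1'} (hγ : γ ∉ L) :
      Step den env p H0 H1 γ p' H0' H1' →
      Step den env (.restr L p) H0 H1 γ (.restr L p') H0' H1'
  | proj {n p H0 H1 γ p' H0' H1'} :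
      Step den env p H0 H1 γ p' H0' H1' →
      Step den env (.proj (n + 1) p) H0 H1 γ (.proj n p') H0' H1'
  | var {v H0 H1 γ p' H0' H1'} :
      Step den env (env v) H0 H1 γ p' H0' H1' →
      Step den env (.var v) H0 H1 γ p' H0' H1'

/-- `R` is a bisimulation: a symmetric relation on processes such that any
transition of a related process can be matched (same label, same packet
lists) by the other, with `R`-related targets. -/
def IsBisim {Pk N C V : Type} (den : N → Pk → Set Pk) (env : V → Proc Pk N C V)
    (R : Proc Pk N C V → Proc Pk N C V → Prop) : Prop :=
  (∀ p q, R p q → R q p) ∧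
  ∀ p q, R p q → ∀ H0 H1 γ p' H0' H1',
    Step den env p H0 H1 γ p' H0' H1' →
    ∃ q', Step den env q H0 H1 γ q' H0' H1' ∧ R p' q'

/-- Bisimilarity: `p ∼ q` iff some bisimulation relates them. -/
def Bisim {Pk N C V : Type} (den : N → Pk → Set Pk) (env : V → Proc Pk N C V)
    (p q : Proc Pk N C V) : Prop :=
  ∃ R, IsBisim den env R ∧ R p q

/-- NetKAT sum distributes over DyNetKAT sequencing:
`(z + y) ; p ∼ (z ; p) ⊕ (y ; p)`, where `zy` denotes the NetKAT
policy `z + y`, i.e. its denotation is the pointwise union. -/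
theorem seq_sum_choice {Pk N C V : Type} (den : N → Pk → Set Pk)
    (env : V → Proc Pk N C V) (z y zy : N)
    (hsum : ∀ σ, den zy σ = den z σ ∪ den y σ)
    (p : Proc Pk N C V) :
    Bisim den env (.seqP zy p) (.choice (.seqP z p) (.seqP y p)) := by
  refine ⟨fun a b => a = b ∨
      (a = .seqP zy p ∧ b = .choice (.seqP z p) (.seqP y p)) ∨
      (b = .seqP zy p ∧ a = .choice (.seqP z p) (.seqP y p)), ⟨?_, ?_⟩, Or.inr (Or.inl ⟨rfl, rfl⟩)⟩
  · rintro a b (rfl | h | h)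
    · exact Or.inl rfl
    · exact Or.inr (Or.inr h)
    · exact Or.inr (Or.inl h)
  · rintro a b (rfl | ⟨rfl, rfl⟩ | ⟨rfl, rfl⟩) H0 H1 γ p' H0' H1' hstep
    · exact ⟨p', hstep, Or.inl rfl⟩
    · cases hstep with
      | seq h =>
        rw [hsum] at h
        cases h with
        | inl h => exact ⟨p, .choiceL (.seq h), Or.inl rfl⟩
        | inr h => exact ⟨p, .choiceR (.seq h), Or.inl rfl⟩
    · cases hstep with
      | choiceL h =>
        cases h with
        | seq h => exact ⟨p, .seq (by rw [hsum]; exact Or.inl h), Or.inl rfl⟩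
      | choiceR h =>
        cases h with
        | seq h => exact ⟨p, .seq (by rw [hsum]; exact Or.inr h), Or.inl rfl⟩
end

section
/- Parallel composition of DyNetKAT processes is commutative up to bisimilarity: for all DyNetKAT processes p and q in normal form, p ∥ q ∼ q ∥ p. -/
/-- DyNetKAT normal forms: finite `⊕`-sums of prefixed processes
`(α·π);d`, `x?z;d`, `x!z;d`, `rcfg(x,z);d`, possibly plus `⊥`. -/
inductive NF {Pk N C V : Type} : Proc Pk N C V → Prop
  | bot : NF .bot
  | test (a b : Pk) (d : Proc Pk N C V) : NF (.test a b d)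
  | recv (x : C) (z : N) (d : Proc Pk N C V) : NF (.recvP x z d)
  | send (x : C) (z : N) (d : Proc Pk N C V) : NF (.sendP x z d)
  | rcfg (x : C) (z : N) (d : Proc Pk N C V) : NF (.rcfgP x z d)
  | choice {p q : Proc Pk N C V} : NF p → NF q → NF (.choice p q)

/-- `∥` is commutative up to bisimilarity, for processes in normal form. -/
theorem par_comm {Pk N C V : Type} (den : N → Pk → Set Pk)
    (env : V → Proc Pk N C V) (p q : Proc Pk N C V)
    (hp : NF p) (hq : NF q) :
    Bisim den env (.par p q) (.par q p) := by

  refine ⟨fun u v => ∃ a b, u = .par a b ∧ v = .par b a, ⟨?_, ?_⟩, p, q, rfl, rfl⟩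
  · rintro u v ⟨a, b, rfl, rfl⟩; exact ⟨b, a, rfl, rfl⟩
  · rintro u v ⟨a, b, rfl, rfl⟩ H0 H1 γ u' H0' H1' hstep
    cases hstep with
    | parL h => exact ⟨_, .parR h, _, _, rfl, rfl⟩
    | parR h => exact ⟨_, .parL h, _, _, rfl, rfl⟩
    | parSyncSR h1 h2 => exact ⟨_, .parSyncRS h2 h1, _, _, rfl, rfl⟩
    | parSyncRS h1 h2 => exact ⟨_, .parSyncSR h2 h1, _, _, rfl, rfl⟩
end

section
/- The deadlocked process ⊥ is a neutral element for parallel composition up to bisimilarity: for every DyNetKAT process p, p ∥ ⊥ ∼ p. -/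
lemma bot_no_step {Pk N C V : Type} {den : N → Pk → Set Pk} {env : V → Proc Pk N C V}
    {H0 H1 γ p' H0' H1'} (h : Step den env (.bot : Proc Pk N C V) H0 H1 γ p' H0' H1') :
    False := by cases h

/-- `⊥` is a neutral element for `∥` up to bisimilarity. -/
theorem par_bot {Pk N C V : Type} (den : N → Pk → Set Pk)
    (env : V → Proc Pk N C V) (p : Proc Pk N C V) :
    Bisim den env (.par p .bot) p := by
  refine ⟨fun a b => a = Proc.par b .bot ∨ b = Proc.par a .bot, ⟨?_, ?_⟩, Or.inl rfl⟩
  · rintro a b (h | h) <;> [exact Or.inr h; exact Or.inl h]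
  · rintro a b (rfl | rfl) H0 H1 γ a' H0' H1' h
    · cases h with
      | parL h => exact ⟨_, h, Or.inl rfl⟩
      | parR h => exact absurd h bot_no_step
      | parSyncSR h1 h2 => exact absurd h2 bot_no_step
      | parSyncRS h1 h2 => exact absurd h2 bot_no_step
    · exact ⟨_, .parL h, Or.inr rfl⟩
end

section
/- The expansion law holds for DyNetKAT parallel composition: for all processes p and q, p ∥ q ∼ (p ⌊ q) ⊕ (q ⌊ p) ⊕ (p | q), where ⌊ is left merge and | is communication merge. -/
/-- Expansion law: `p ∥ q ∼ (p ⌊ q) ⊕ (q ⌊ p) ⊕ (p | q)`. -/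
theorem par_expansion {Pk N C V : Type} (den : N → Pk → Set Pk)
    (env : V → Proc Pk N C V) (p q : Proc Pk N C V) :
    Bisim den env (.par p q)
      (.choice (.choice (.lmerge p q) (.lmerge q p)) (.cmerge p q)) := by
  classical
  refine ⟨fun x y => x = y ∨ (∃ a b, x = .par a b ∧ y = .par b a) ∨
    (∃ a b, x = .par a b ∧ y = .choice (.choice (.lmerge a b) (.lmerge b a)) (.cmerge a b)) ∨
    (∃ a b, y = .par a b ∧ x = .choice (.choice (.lmerge a b) (.lmerge b a)) (.cmerge a b)),
    ⟨?_, ?_⟩, Or.inr (Or.inr (Or.inl ⟨p, q, rfl, rfl⟩))⟩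
  · rintro x y (rfl | ⟨a,b,rfl,rfl⟩ | ⟨a,b,rfl,rfl⟩ | ⟨a,b,rfl,rfl⟩)
    · exact Or.inl rfl
    · exact Or.inr (Or.inl ⟨b,a,rfl,rfl⟩)
    · exact Or.inr (Or.inr (Or.inr ⟨a,b,rfl,rfl⟩))
    · exact Or.inr (Or.inr (Or.inl ⟨a,b,rfl,rfl⟩))
  · rintro x y (rfl | ⟨a,b,rfl,rfl⟩ | ⟨a,b,rfl,rfl⟩ | ⟨a,b,rfl,rfl⟩) H0 H1 γ x' H0' H1' hs
    · exact ⟨x', hs, Or.inl rfl⟩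
    · cases hs with
      | parL s => exact ⟨_, .parR s, Or.inr (Or.inl ⟨_,_,rfl,rfl⟩)⟩
      | parR s => exact ⟨_, .parL s, Or.inr (Or.inl ⟨_,_,rfl,rfl⟩)⟩
      | parSyncSR s t => exact ⟨_, .parSyncRS t s, Or.inr (Or.inl ⟨_,_,rfl,rfl⟩)⟩
      | parSyncRS s t => exact ⟨_, .parSyncSR t s, Or.inr (Or.inl ⟨_,_,rfl,rfl⟩)⟩
    · cases hs with
      | parL s => exact ⟨_, .choiceL (.choiceL (.lmerge s)), Or.inl rfl⟩
      | parR s => exact ⟨_, .choiceL (.choiceR (.lmerge s)), Or.inr (Or.inl ⟨_,_,rfl,rfl⟩)⟩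
      | parSyncSR s t => exact ⟨_, .choiceR (.cmergeSR s t), Or.inl rfl⟩
      | parSyncRS s t => exact ⟨_, .choiceR (.cmergeRS s t), Or.inl rfl⟩
    · cases hs with
      | choiceL h =>
        cases h with
        | choiceL h2 =>
          cases h2 with
          | lmerge s => exact ⟨_, .parL s, Or.inl rfl⟩
        | choiceR h2 =>
          cases h2 with
          | lmerge s => exact ⟨_, .parR s, Or.inr (Or.inl ⟨_,_,rfl,rfl⟩)⟩
      | choiceR h =>
        cases h with
        | cmergeRS s t => exact ⟨_, .parSyncRS s t, Or.inl rfl⟩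
        | cmergeSR s t => exact ⟨_, .parSyncSR s t, Or.inl rfl⟩
end

section
/- Left merge unfolds a prefixed action into parallel composition: for any action prefix a (either a dup-free NetKAT policy z, a receive x?z, a send x!z, or a constant rcfg(x,z)) and DyNetKAT processes p, q, it holds that (a ; p) ⌊ q ∼ a ; (p ∥ q). -/
/-- Action prefixes for the left-merge axiom: a dup-free NetKAT policy `z`,
a receive `x?z`, a send `x!z`, or a constant `rcfg(x,z)`. -/
inductive At1 (N C : Type) where
  | pol (z : N)
  | recv (x : C) (z : N)
  | send (x : C) (z : N)
  | rcfg (x : C) (z : N)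

/-- The process `a ; p` for an action prefix `a`. -/
def At1.proc {Pk N C V : Type} : At1 N C → Proc Pk N C V → Proc Pk N C V
  | .pol z, d => .seqP z d
  | .recv x z, d => .recvP x z d
  | .send x z, d => .sendP x z d
  | .rcfg x z, d => .rcfgP x z d

/-- Left merge unfolds a prefixed action into parallel composition:
`(a ; p) ⌊ q ∼ a ; (p ∥ q)`. -/
theorem lmerge_prefix {Pk N C V : Type} (den : N → Pk → Set Pk)
    (env : V → Proc Pk N C V) (a : At1 N C) (p q : Proc Pk N C V) :
    Bisim den env (.lmerge (a.proc p) q) (a.proc (.par p q)) := by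
  classical
  refine ⟨fun u v => u = v ∨
      (u = .lmerge (a.proc p) q ∧ v = a.proc (.par p q)) ∨
      (v = .lmerge (a.proc p) q ∧ u = a.proc (.par p q)), ⟨?_, ?_⟩, Or.inr (Or.inl ⟨rfl, rfl⟩)⟩
  · rintro u v (rfl | h | h)
    · exact Or.inl rfl
    · exact Or.inr (Or.inr h)
    · exact Or.inr (Or.inl h)
  · rintro u v (rfl | ⟨rfl, rfl⟩ | ⟨rfl, rfl⟩) H0 H1 γ u' H0' H1' hs
    · exact ⟨u', hs, Or.inl rfl⟩
    · -- u = lmerge (a.proc p) q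
      cases a with
      | pol z =>
        cases hs with
        | lmerge h =>
          cases h with
          | seq h => exact ⟨_, Step.seq h, Or.inl rfl⟩
      | recv x z =>
        cases hs with
        | lmerge h => cases h with
          | recv => exact ⟨_, Step.recv, Or.inl rfl⟩
      | send x z =>
        cases hs with
        | lmerge h => cases h with
          | send => exact ⟨_, Step.send, Or.inl rfl⟩
      | rcfg x z =>
        cases hs with
        | lmerge h => cases h with
          | rcfg => exact ⟨_, Step.rcfg, Or.inl rfl⟩
    · -- u = a.proc (par p q)
      cases a with
      | pol z =>
        cases hs with
        | seq h => exact ⟨_, Step.lmerge (Step.seq h), Or.inl rfl⟩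
      | recv x z =>
        cases hs with
        | recv => exact ⟨_, Step.lmerge Step.recv, Or.inl rfl⟩
      | send x z =>
        cases hs with
        | send => exact ⟨_, Step.lmerge Step.send, Or.inl rfl⟩
      | rcfg x z =>
        cases hs with
        | rcfg => exact ⟨_, Step.lmerge Step.rcfg, Or.inl rfl⟩
end

section
/- Left merge distributes over choice up to bisimilarity: for all DyNetKAT processes p, q, r, (p ⊕ q) ⌊ r ∼ (p ⌊ r) ⊕ (q ⌊ r). -/
/-- Left merge distributes over choice:
`(p ⊕ q) ⌊ r ∼ (p ⌊ r) ⊕ (q ⌊ r)`. -/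
theorem lmerge_choice {Pk N C V : Type} (den : N → Pk → Set Pk)
    (env : V → Proc Pk N C V) (p q r : Proc Pk N C V) :
    Bisim den env (.lmerge (.choice p q) r)
      (.choice (.lmerge p r) (.lmerge q r)) := by
  classical
  refine ⟨fun a b => a = b ∨
    (a = .lmerge (.choice p q) r ∧ b = .choice (.lmerge p r) (.lmerge q r)) ∨
    (b = .lmerge (.choice p q) r ∧ a = .choice (.lmerge p r) (.lmerge q r)),
    ⟨fun a b h => by tauto, ?_⟩, Or.inr (Or.inl ⟨rfl, rfl⟩)⟩
  rintro a b (rfl | ⟨rfl, rfl⟩ | ⟨rfl, rfl⟩) H0 H1 γ a' H0' H1' hs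
  · exact ⟨a', hs, Or.inl rfl⟩
  · -- a = lmerge (choice p q) r
    rcases hs with _|_|_|_|_|_|_|_|_|_|_|h|_|_|_|_|_
    rcases h with _|_|_|_|_|⟨h⟩|⟨h⟩
    · exact ⟨_, .choiceL (.lmerge h), Or.inl rfl⟩
    · exact ⟨_, .choiceR (.lmerge h), Or.inl rfl⟩
  · -- a = choice (lmerge p r) (lmerge q r)
    rcases hs with _|_|_|_|_|⟨h⟩|⟨h⟩
    · rcases h with _|_|_|_|_|_|_|_|_|_|_|h|_|_|_|_|_
      exact ⟨_, .lmerge (.choiceL h), Or.inl rfl⟩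
    · rcases h with _|_|_|_|_|_|_|_|_|_|_|h|_|_|_|_|_
      exact ⟨_, .lmerge (.choiceR h), Or.inl rfl⟩
end

section
/- The communication merge of a matching receive-prefix and send-prefix equals a rcfg-prefixed parallel composition up to bisimilarity: for a channel x, dup-free NetKAT policy z, and DyNetKAT processes p, q, (x?z ; p) | (x!z ; q) ∼ rcfg(x,z) ; (p ∥ q). -/
/-- Communication merge of matching receive and send prefixes:
`(x?z ; p) | (x!z ; q) ∼ rcfg(x,z) ; (p ∥ q)`. -/
theorem cmerge_sync {Pk N C V : Type} (den : N → Pk → Set Pk)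
    (env : V → Proc Pk N C V) (x : C) (z : N) (p q : Proc Pk N C V) :
    Bisim den env (.cmerge (.recvP x z p) (.sendP x z q))
      (.rcfgP x z (.par p q)) := by
  classical
  refine ⟨fun a b =>
      (a = Proc.cmerge (.recvP x z p) (.sendP x z q) ∧ b = Proc.rcfgP x z (.par p q)) ∨
      (b = Proc.cmerge (.recvP x z p) (.sendP x z q) ∧ a = Proc.rcfgP x z (.par p q)) ∨
      a = b, ⟨?_, ?_⟩, Or.inl ⟨rfl, rfl⟩⟩
  · rintro a b (⟨h1, h2⟩ | ⟨h1, h2⟩ | h); exacts [Or.inr (Or.inl ⟨h1, h2⟩),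
      Or.inl ⟨h1, h2⟩, Or.inr (Or.inr h.symm)]
  · rintro a b (⟨rfl, rfl⟩ | ⟨rfl, rfl⟩ | rfl) H0 H1 γ a' H0' H1' hs
    · cases hs with
      | cmergeRS h1 h2 =>
        cases h1; cases h2
        exact ⟨Proc.par p q, Step.rcfg, Or.inr (Or.inr rfl)⟩
      | cmergeSR h1 h2 => cases h1
    · cases hs
      exact ⟨Proc.par p q, Step.cmergeRS Step.recv Step.send, Or.inr (Or.inr rfl)⟩
    · exact ⟨a', hs, Or.inr (Or.inr rfl)⟩
end

section
/- Communication merge distributes over choice and is commutative up to bisimilarity: for all DyNetKAT processes p, q, r we have (p ⊕ q) | r ∼ (p | r) ⊕ (q | r), and p | q ∼ q | p. -/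
section Aux
variable {Pk N C V : Type} (den : N → Pk → Set Pk) (env : V → Proc Pk N C V)

theorem cmerge_dist (p q r : Proc Pk N C V) :
    Bisim den env (.cmerge (.choice p q) r)
      (.choice (.cmerge p r) (.cmerge q r)) := by
  refine ⟨fun u v => u = v ∨
      (∃ p q r : Proc Pk N C V, u = .cmerge (.choice p q) r ∧
        v = .choice (.cmerge p r) (.cmerge q r)) ∨
      (∃ p q r : Proc Pk N C V, v = .cmerge (.choice p q) r ∧
        u = .choice (.cmerge p r) (.cmerge q r)), ⟨?_, ?_⟩,
      Or.inr (Or.inl ⟨p, q, r, rfl, rfl⟩)⟩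
  · rintro u v (rfl | h | h)
    · exact Or.inl rfl
    · exact Or.inr (Or.inr h)
    · exact Or.inr (Or.inl h)
  · rintro u v (rfl | ⟨a, b, c, rfl, rfl⟩ | ⟨a, b, c, rfl, rfl⟩) H0 H1 γ u' H0' H1' hs
    · exact ⟨u', hs, Or.inl rfl⟩
    · cases hs with
      | cmergeRS h1 h2 =>
        cases h1 with
        | choiceL h => exact ⟨_, .choiceL (.cmergeRS h h2), Or.inl rfl⟩
        | choiceR h => exact ⟨_, .choiceR (.cmergeRS h h2), Or.inl rfl⟩
      | cmergeSR h1 h2 =>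
        cases h1 with
        | choiceL h => exact ⟨_, .choiceL (.cmergeSR h h2), Or.inl rfl⟩
        | choiceR h => exact ⟨_, .choiceR (.cmergeSR h h2), Or.inl rfl⟩
    · cases hs with
      | choiceL h =>
        cases h with
        | cmergeRS h1 h2 => exact ⟨_, .cmergeRS (.choiceL h1) h2, Or.inl rfl⟩
        | cmergeSR h1 h2 => exact ⟨_, .cmergeSR (.choiceL h1) h2, Or.inl rfl⟩
      | choiceR h =>
        cases h with
        | cmergeRS h1 h2 => exact ⟨_, .cmergeRS (.choiceR h1) h2, Or.inl rfl⟩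
        | cmergeSR h1 h2 => exact ⟨_, .cmergeSR (.choiceR h1) h2, Or.inl rfl⟩

theorem cmerge_comm (p q : Proc Pk N C V) :
    Bisim den env (.cmerge p q) (.cmerge q p) := by
  refine ⟨fun u v => (∃ a b : Proc Pk N C V, u = .cmerge a b ∧ v = .cmerge b a) ∨
      (∃ a b : Proc Pk N C V, u = .par a b ∧ v = .par b a), ⟨?_, ?_⟩,
      Or.inl ⟨p, q, rfl, rfl⟩⟩
  · rintro u v (⟨a, b, rfl, rfl⟩ | ⟨a, b, rfl, rfl⟩)
    · exact Or.inl ⟨b, a, rfl, rfl⟩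
    · exact Or.inr ⟨b, a, rfl, rfl⟩
  · rintro u v (⟨a, b, rfl, rfl⟩ | ⟨a, b, rfl, rfl⟩) H0 H1 γ u' H0' H1' hs
    · cases hs with
      | cmergeRS h1 h2 => exact ⟨_, .cmergeSR h2 h1, Or.inr ⟨_, _, rfl, rfl⟩⟩
      | cmergeSR h1 h2 => exact ⟨_, .cmergeRS h2 h1, Or.inr ⟨_, _, rfl, rfl⟩⟩
    · cases hs with
      | parL h => exact ⟨_, .parR h, Or.inr ⟨_, _, rfl, rfl⟩⟩
      | parR h => exact ⟨_, .parL h, Or.inr ⟨_, _, rfl, rfl⟩⟩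
      | parSyncSR h1 h2 => exact ⟨_, .parSyncRS h2 h1, Or.inr ⟨_, _, rfl, rfl⟩⟩
      | parSyncRS h1 h2 => exact ⟨_, .parSyncSR h2 h1, Or.inr ⟨_, _, rfl, rfl⟩⟩

end Aux

/-- Communication merge distributes over choice and is commutative:
`(p ⊕ q) | r ∼ (p | r) ⊕ (q | r)` and `p | q ∼ q | p`. -/
theorem cmerge_choice_and_comm {Pk N C V : Type} (den : N → Pk → Set Pk)
    (env : V → Proc Pk N C V) :
    (∀ p q r : Proc Pk N C V,
      Bisim den env (.cmerge (.choice p q) r)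
        (.choice (.cmerge p r) (.cmerge q r))) ∧
    (∀ p q : Proc Pk N C V, Bisim den env (.cmerge p q) (.cmerge q p)) := by
  exact ⟨fun p q r => cmerge_dist den env p q r, fun p q => cmerge_comm den env p q⟩
end

section
/- The Approximation Induction Principle is sound for finitely branching DyNetKAT processes: if p and q are processes all of whose reachable configurations are finitely branching, and π_n(p) ∼ π_n(q) for every n ∈ ℕ, then p ∼ q. -/
/-- One-step reachability between configurations `(d, H, H')`. -/
def StepC {Pk N C V : Type} (den : N → Pk → Set Pk) (env : V → Proc Pk N C V)
    (c c' : Proc Pk N C V × List Pk × List Pk) : Prop :=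
  ∃ γ, Step den env c.1 c.2.1 c.2.2 γ c'.1 c'.2.1 c'.2.2

/-- A configuration is finitely branching if it has finitely many
outgoing transitions. -/
def FinBranch {Pk N C V : Type} (den : N → Pk → Set Pk) (env : V → Proc Pk N C V)
    (c : Proc Pk N C V × List Pk × List Pk) : Prop :=
  {t : Lbl Pk N C × (Proc Pk N C V × List Pk × List Pk) |
    Step den env c.1 c.2.1 c.2.2 t.1 t.2.1 t.2.2.1 t.2.2.2}.Finite

section AIPAux

variable {Pk N C V : Type} (den : N → Pk → Set Pk) (env : V → Proc Pk N C V)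

/-- Shape-and-replay lemma: every transition either is a packet step
(consuming the head of `H0`, pushing onto `H1`) or leaves histories
unchanged, and in both cases it can be replayed at arbitrary histories. -/
lemma step_repl {p : Proc Pk N C V} {H0 H1 : List Pk} {γ p' H0' H1'}
    (h : Step den env p H0 H1 γ p' H0' H1') :
    (∃ a b, γ = .pkt a b ∧ H0 = a :: H0' ∧ H1' = b :: H1 ∧
      ∀ K0 K1, Step den env p (a :: K0) K1 γ p' K0 (b :: K1)) ∨
    ((∀ a b, γ ≠ .pkt a b) ∧ H0' = H0 ∧ H1' = H1 ∧
      ∀ K0 K1, Step den env p K0 K1 γ p' K0 K1) := by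
  induction h with
  | seq h => exact Or.inl ⟨_, _, rfl, rfl, rfl, fun K0 K1 => .seq h⟩
  | test => exact Or.inl ⟨_, _, rfl, rfl, rfl, fun K0 K1 => .test⟩
  | recv => exact Or.inr ⟨(fun _ _ h => by cases h), rfl, rfl, fun _ _ => .recv⟩
  | send => exact Or.inr ⟨(fun _ _ h => by cases h), rfl, rfl, fun _ _ => .send⟩
  | rcfg => exact Or.inr ⟨(fun _ _ h => by cases h), rfl, rfl, fun _ _ => .rcfg⟩
  | choiceL _ ih =>
    rcases ih with ⟨a, b, rfl, rfl, rfl, hs⟩ | ⟨hne, rfl, rfl, hs⟩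
    · exact Or.inl ⟨a, b, rfl, rfl, rfl, fun K0 K1 => .choiceL (hs K0 K1)⟩
    · exact Or.inr ⟨hne, rfl, rfl, fun K0 K1 => .choiceL (hs K0 K1)⟩
  | choiceR _ ih =>
    rcases ih with ⟨a, b, rfl, rfl, rfl, hs⟩ | ⟨hne, rfl, rfl, hs⟩
    · exact Or.inl ⟨a, b, rfl, rfl, rfl, fun K0 K1 => .choiceR (hs K0 K1)⟩
    · exact Or.inr ⟨hne, rfl, rfl, fun K0 K1 => .choiceR (hs K0 K1)⟩
  | parL _ ih =>
    rcases ih with ⟨a, b, rfl, rfl, rfl, hs⟩ | ⟨hne, rfl, rfl, hs⟩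
    · exact Or.inl ⟨a, b, rfl, rfl, rfl, fun K0 K1 => .parL (hs K0 K1)⟩
    · exact Or.inr ⟨hne, rfl, rfl, fun K0 K1 => .parL (hs K0 K1)⟩
  | parR _ ih =>
    rcases ih with ⟨a, b, rfl, rfl, rfl, hs⟩ | ⟨hne, rfl, rfl, hs⟩
    · exact Or.inl ⟨a, b, rfl, rfl, rfl, fun K0 K1 => .parR (hs K0 K1)⟩
    · exact Or.inr ⟨hne, rfl, rfl, fun K0 K1 => .parR (hs K0 K1)⟩
  | parSyncSR _ _ ih1 ih2 =>
    rcases ih1 with ⟨a, b, h, _⟩ | ⟨_, _, _, hs1⟩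
    · exact absurd h (by simp)
    rcases ih2 with ⟨a, b, h, _⟩ | ⟨_, _, _, hs2⟩
    · exact absurd h (by simp)
    exact Or.inr ⟨(fun _ _ h => by cases h), rfl, rfl,
      fun K0 K1 => .parSyncSR (hs1 K0 K1) (hs2 K0 K1)⟩
  | parSyncRS _ _ ih1 ih2 =>
    rcases ih1 with ⟨a, b, h, _⟩ | ⟨_, _, _, hs1⟩
    · exact absurd h (by simp)
    rcases ih2 with ⟨a, b, h, _⟩ | ⟨_, _, _, hs2⟩
    · exact absurd h (by simp)
    exact Or.inr ⟨(fun _ _ h => by cases h), rfl, rfl,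
      fun K0 K1 => .parSyncRS (hs1 K0 K1) (hs2 K0 K1)⟩
  | lmerge _ ih =>
    rcases ih with ⟨a, b, rfl, rfl, rfl, hs⟩ | ⟨hne, rfl, rfl, hs⟩
    · exact Or.inl ⟨a, b, rfl, rfl, rfl, fun K0 K1 => .lmerge (hs K0 K1)⟩
    · exact Or.inr ⟨hne, rfl, rfl, fun K0 K1 => .lmerge (hs K0 K1)⟩
  | cmergeRS _ _ ih1 ih2 =>
    rcases ih1 with ⟨a, b, h, _⟩ | ⟨_, _, _, hs1⟩
    · exact absurd h (by simp)
    rcases ih2 with ⟨a, b, h, _⟩ | ⟨_, _, _, hs2⟩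
    · exact absurd h (by simp)
    exact Or.inr ⟨(fun _ _ h => by cases h), rfl, rfl,
      fun K0 K1 => .cmergeRS (hs1 K0 K1) (hs2 K0 K1)⟩
  | cmergeSR _ _ ih1 ih2 =>
    rcases ih1 with ⟨a, b, h, _⟩ | ⟨_, _, _, hs1⟩
    · exact absurd h (by simp)
    rcases ih2 with ⟨a, b, h, _⟩ | ⟨_, _, _, hs2⟩
    · exact absurd h (by simp)
    exact Or.inr ⟨(fun _ _ h => by cases h), rfl, rfl,
      fun K0 K1 => .cmergeSR (hs1 K0 K1) (hs2 K0 K1)⟩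
  | restr hγ _ ih =>
    rcases ih with ⟨a, b, rfl, rfl, rfl, hs⟩ | ⟨hne, rfl, rfl, hs⟩
    · exact Or.inl ⟨a, b, rfl, rfl, rfl, fun K0 K1 => .restr hγ (hs K0 K1)⟩
    · exact Or.inr ⟨hne, rfl, rfl, fun K0 K1 => .restr hγ (hs K0 K1)⟩
  | proj _ ih =>
    rcases ih with ⟨a, b, rfl, rfl, rfl, hs⟩ | ⟨hne, rfl, rfl, hs⟩
    · exact Or.inl ⟨a, b, rfl, rfl, rfl, fun K0 K1 => .proj (hs K0 K1)⟩
    · exact Or.inr ⟨hne, rfl, rfl, fun K0 K1 => .proj (hs K0 K1)⟩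
  | var _ ih =>
    rcases ih with ⟨a, b, rfl, rfl, rfl, hs⟩ | ⟨hne, rfl, rfl, hs⟩
    · exact Or.inl ⟨a, b, rfl, rfl, rfl, fun K0 K1 => .var (hs K0 K1)⟩
    · exact Or.inr ⟨hne, rfl, rfl, fun K0 K1 => .var (hs K0 K1)⟩

/-- Push the output packet of a label onto a list (identity for non-packet labels). -/
def shiftL {Pk N C : Type} (γ : Lbl Pk N C) (K : List Pk) : List Pk :=
  match γ with
  | .pkt _ b => b :: K
  | _ => K

lemma shiftL_eq {Pk N C : Type} {γ : Lbl Pk N C} (hne : ∀ a b, γ ≠ .pkt a b)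
    (K : List Pk) : shiftL γ K = K := by
  cases γ with
  | pkt a b => exact absurd rfl (hne a b)
  | recv => rfl
  | send => rfl
  | rcfg => rfl

/-- Finite branching only depends on the process and input history. -/
lemma fb_H1 {d : Proc Pk N C V} {H0 H1 K1 : List Pk}
    (h : FinBranch den env (d, H0, H1)) : FinBranch den env (d, H0, K1) := by
  apply (h.image (fun t => (t.1, t.2.1, t.2.2.1, shiftL t.1 K1))).subset
  rintro ⟨γ, d', M0, M1⟩ ht
  have ht' : Step den env d H0 K1 γ d' M0 M1 := ht
  rcases step_repl den env ht' with ⟨a, b, hγ, h0, h1, hs⟩ | ⟨hne, h0, h1, hs⟩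
  · subst hγ h0 h1
    exact ⟨(Lbl.pkt a b, d', M0, b :: H1), hs M0 H1, rfl⟩
  · subst h0 h1
    exact ⟨(γ, d', M0, H1), hs M0 H1, by simp [shiftL_eq hne]⟩

/-- Runs can be replayed with any output history. -/
lemma run_shift {c c' : Proc Pk N C V × List Pk × List Pk}
    (h : Relation.ReflTransGen (StepC den env) c c') :
    ∀ K, ∃ K', Relation.ReflTransGen (StepC den env) (c.1, c.2.1, K) (c'.1, c'.2.1, K') := by
  induction h with
  | refl => exact fun K => ⟨K, .refl⟩
  | @tail m e _ hstep ih =>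
    intro K
    obtain ⟨K', hrun⟩ := ih K
    obtain ⟨γ, hs⟩ := hstep
    rcases step_repl den env hs with ⟨a, b, hγ, h0, h1, hrep⟩ | ⟨hne, h0, h1, hrep⟩
    · refine ⟨b :: K', hrun.tail ⟨γ, ?_⟩⟩
      show Step den env m.1 m.2.1 K' γ e.1 e.2.1 (b :: K')
      rw [h0]; exact hrep _ _
    · refine ⟨K', hrun.tail ⟨γ, ?_⟩⟩
      show Step den env m.1 m.2.1 K' γ e.1 e.2.1 K'
      rw [h0]; exact hrep _ _

/-- All configurations with `a` as process, at any histories, reach only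
finitely branching configurations. -/
def AllFB (a : Proc Pk N C V) : Prop :=
  ∀ H0 H1 c, Relation.ReflTransGen (StepC den env) (a, H0, H1) c → FinBranch den env c

lemma AllFB_step {a : Proc Pk N C V} {H0 H1 γ a' H0' H1'} (hA : AllFB den env a)
    (hs : Step den env a H0 H1 γ a' H0' H1') : AllFB den env a' := by
  intro K0 K1 c hrun
  obtain ⟨e, N0, N1⟩ := c
  rcases step_repl den env hs with ⟨x, y, hγ, h0, h1, hrep⟩ | ⟨hne, h0, h1, hrep⟩
  · obtain ⟨K', hrun'⟩ := run_shift den env hrun (y :: K1)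
    have hfull : Relation.ReflTransGen (StepC den env) (a, x :: K0, K1) (e, N0, K') :=
      Relation.ReflTransGen.head ⟨γ, hrep K0 K1⟩ hrun'
    exact fb_H1 den env (hA _ _ _ hfull)
  · exact hA K0 K1 _ (Relation.ReflTransGen.head ⟨γ, hrep K0 K1⟩ hrun)

lemma bisim_symm {p q : Proc Pk N C V} (h : Bisim den env p q) : Bisim den env q p := by
  obtain ⟨R, hR, hpq⟩ := h
  exact ⟨R, hR, hR.1 _ _ hpq⟩

lemma bisim_step {p q : Proc Pk N C V} {H0 H1 γ p' H0' H1'} (h : Bisim den env p q)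
    (hs : Step den env p H0 H1 γ p' H0' H1') :
    ∃ q', Step den env q H0 H1 γ q' H0' H1' ∧ Bisim den env p' q' := by
  obtain ⟨R, hR, hpq⟩ := h
  obtain ⟨q', hq, hR'⟩ := hR.2 _ _ hpq _ _ _ _ _ _ hs
  exact ⟨q', hq, R, hR, hR'⟩

lemma step_proj_inv {m : ℕ} {x : Proc Pk N C V} {H0 H1 γ d H0' H1'}
    (h : Step den env (.proj m x) H0 H1 γ d H0' H1') :
    ∃ n x', m = n + 1 ∧ d = Proc.proj n x' ∧ Step den env x H0 H1 γ x' H0' H1' := by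
  cases h with
  | proj h => exact ⟨_, _, rfl, rfl, h⟩

lemma bisim_proj_decr {n : ℕ} {x y : Proc Pk N C V}
    (h : Bisim den env (.proj (n + 1) x) (.proj (n + 1) y)) :
    Bisim den env (.proj n x) (.proj n y) := by
  refine ⟨fun u v => ∃ m a b, u = Proc.proj m a ∧ v = Proc.proj m b ∧
      Bisim den env (.proj (m + 1) a) (.proj (m + 1) b),
    ⟨?_, ?_⟩, n, x, y, rfl, rfl, h⟩
  · rintro u v ⟨m, a, b, rfl, rfl, hb⟩
    exact ⟨m, b, a, rfl, rfl, bisim_symm den env hb⟩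
  · rintro u v ⟨m, a, b, rfl, rfl, hb⟩ H0 H1 γ u' H0' H1' hs
    obtain ⟨k, a', hm, rfl, hsa⟩ := step_proj_inv den env hs
    subst hm
    have hsa2 : Step den env (.proj (k + 1 + 1) a) H0 H1 γ (.proj (k + 1) a') H0' H1' :=
      .proj hsa
    obtain ⟨q'', hq'', hb'⟩ := bisim_step den env hb hsa2
    obtain ⟨n', b', hk, rfl, hsb⟩ := step_proj_inv den env hq''
    obtain rfl : n' = k + 1 := by omega
    exact ⟨.proj k b', .proj hsb, k, a', b', rfl, rfl, hb'⟩

lemma bisim_proj_add {m : ℕ} {x y : Proc Pk N C V} :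
    ∀ k, Bisim den env (.proj (m + k) x) (.proj (m + k) y) →
      Bisim den env (.proj m x) (.proj m y)
  | 0, h => h
  | k + 1, h => bisim_proj_add k (bisim_proj_decr den env h)

lemma bisim_proj_mono {m n : ℕ} {x y : Proc Pk N C V} (hmn : m ≤ n)
    (h : Bisim den env (.proj n x) (.proj n y)) :
    Bisim den env (.proj m x) (.proj m y) := by
  obtain ⟨k, rfl⟩ := Nat.exists_eq_add_of_le hmn
  exact bisim_proj_add den env k h

end AIPAux

/-- Approximation Induction Principle: if all configurations reachable
from `p` and from `q` are finitely branching and `π_n(p) ∼ π_n(q)` for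
every `n`, then `p ∼ q`. -/
theorem aip {Pk N C V : Type} (den : N → Pk → Set Pk)
    (env : V → Proc Pk N C V) (p q : Proc Pk N C V)
    (hp : ∀ (H H' : List Pk) c,
      Relation.ReflTransGen (StepC den env) (p, H, H') c → FinBranch den env c)
    (hq : ∀ (H H' : List Pk) c,
      Relation.ReflTransGen (StepC den env) (q, H, H') c → FinBranch den env c)
    (hproj : ∀ n : ℕ, Bisim den env (.proj n p) (.proj n q)) :
    Bisim den env p q := by
    classical
  refine ⟨fun a b => AllFB den env a ∧ AllFB den env b ∧
      ∀ n, Bisim den env (.proj n a) (.proj n b), ⟨?_, ?_⟩, hp, hq, hproj⟩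
  · rintro a b ⟨ha, hb, hn⟩
    exact ⟨hb, ha, fun n => bisim_symm den env (hn n)⟩
  · rintro a b ⟨ha, hb, hn⟩ H0 H1 γ a' H0' H1' hs
    have hfb : FinBranch den env (b, H0, H1) := hb H0 H1 _ .refl
    have hTfin : {b' | Step den env b H0 H1 γ b' H0' H1'}.Finite := by
      apply (hfb.image (fun t => t.2.1)).subset
      rintro b' hb'
      exact ⟨(γ, b', H0', H1'), hb', rfl⟩
    have hSne : ∀ n : ℕ, ∃ b', Step den env b H0 H1 γ b' H0' H1' ∧
        Bisim den env (.proj n a') (.proj n b') := by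
      intro n
      have hsp : Step den env (.proj (n + 1) a) H0 H1 γ (.proj n a') H0' H1' := .proj hs
      obtain ⟨q', hq', hbq⟩ := bisim_step den env (hn (n + 1)) hsp
      obtain ⟨k, b', hk, rfl, hsb⟩ := step_proj_inv den env hq'
      obtain rfl : k = n := by omega
      exact ⟨b', hsb, hbq⟩
    have hkey : ∃ b', Step den env b H0 H1 γ b' H0' H1' ∧
        ∀ n, Bisim den env (.proj n a') (.proj n b') := by
      by_contra hcon
      push_neg at hcon
      choose f hf using fun b' (h : Step den env b H0 H1 γ b' H0' H1') => hcon b' h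
      obtain ⟨b', hbT, hbis⟩ := hSne (hTfin.toFinset.sup
        (fun b' => if h : Step den env b H0 H1 γ b' H0' H1' then f b' h else 0))
      refine hf b' hbT (bisim_proj_mono den env ?_ hbis)
      have hmem : b' ∈ hTfin.toFinset := hTfin.mem_toFinset.mpr hbT
      have h2 := Finset.le_sup (f := fun b' =>
        if h : Step den env b H0 H1 γ b' H0' H1' then f b' h else 0) hmem
      simpa [hbT] using h2
    obtain ⟨b', hbT, hball⟩ := hkey
    exact ⟨b', hbT, AllFB_step den env ha hs, AllFB_step den env hb hbT, hball⟩
end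

section
/- Semantic layering: two dup-free NetKAT policies p and q have equal denotational semantics if and only if for every DyNetKAT process d, the sequenced processes p;d and q;d are bisimilar. That is, ⟦p⟧ = ⟦q⟧ iff ∀d, (p;d) ∼ (q;d). -/
/-- Semantic layering: two dup-free NetKAT policies have equal
denotational semantics iff sequencing them with any DyNetKAT process
yields bisimilar processes. -/
theorem semantic_layering {Pk N C V : Type} (den : N → Pk → Set Pk)
    (env : V → Proc Pk N C V) (p q : N) :
    den p = den q ↔ ∀ d : Proc Pk N C V, Bisim den env (.seqP p d) (.seqP q d) := by
  constructor
  · intro h d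
    refine ⟨fun a b => a = b ∨ (a = .seqP p d ∧ b = .seqP q d) ∨ (a = .seqP q d ∧ b = .seqP p d),
      ⟨?_, ?_⟩, Or.inr (Or.inl ⟨rfl, rfl⟩)⟩
    · rintro a b (rfl | ⟨rfl, rfl⟩ | ⟨rfl, rfl⟩)
      · exact Or.inl rfl
      · exact Or.inr (Or.inr ⟨rfl, rfl⟩)
      · exact Or.inr (Or.inl ⟨rfl, rfl⟩)
    · rintro a b (rfl | ⟨rfl, rfl⟩ | ⟨rfl, rfl⟩) H0 H1 γ a' H0' H1' hs
      · exact ⟨a', hs, Or.inl rfl⟩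
      · cases hs with
        | seq hmem => exact ⟨d, Step.seq (h ▸ hmem), Or.inl rfl⟩
      · cases hs with
        | seq hmem => exact ⟨d, Step.seq (h.symm ▸ hmem), Or.inl rfl⟩
  · intro h
    funext σ
    ext σ'
    have key : ∀ (a b : N), Bisim den env (Proc.seqP a (Pk := Pk) (C := C) (V := V) .bot)
        (Proc.seqP b .bot) → σ' ∈ den a σ → σ' ∈ den b σ := by
      rintro a b ⟨R, ⟨_, hstep⟩, hR⟩ hmem
      obtain ⟨q', hq', _⟩ := hstep _ _ hR [σ] [] (.pkt σ σ') .bot [] [σ']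
        (Step.seq hmem)
      cases hq' with
      | seq hmem' => exact hmem'
    constructor
    · exact key p q (h _)
    · have hsym : Bisim den env (Proc.seqP q (Pk := Pk) (C := C) (V := V) .bot)
        (Proc.seqP p .bot) := by
        obtain ⟨R, hB, hR⟩ := h .bot
        exact ⟨R, hB, hB.1 _ _ hR⟩
      exact key q p hsym
end
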